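/- Let p be a prime and let m ≥ 1, r be integers with 0 ≤ r ≤ m(p−1), and suppose d_RM(r,m) ≥ 2. Then for every point s ∈ 𝔽_p^m, the minimum over all nonzero reduced polynomials f ∈ 𝔽_p[x_1,…,x_m] of total degree at most r of #{v ∈ 𝔽_p^m : v ≠ s and f(v) ≠ 0} equals d_RM(r,m) − 1. In particular this minimum (the distance of the once-punctured Reed–Muller code) is independent of the puncture location s. -/

import Mathlib

/-!
Over a field with `q` elements, the lower bound is the classical Reed–Muller bound, proved by
induction on the number of variables: if `f` has degree `t ≤ q - 1` in `x₀` with leading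
coefficient `g`, then above every point where `g` does not vanish `f` restricts to a nonzero
univariate polynomial of degree at most `t`, hence has at least `q - t` nonzeros there, while `g`
is reduced of total degree at most `r - t`. Removing the puncture `s` loses at most one nonzero.

For the matching example write `r = a (q - 1) + b` and take
`∏_{i < a} ∏_{c ≠ sᵢ} (xᵢ - c) · ∏_{c ∈ S} (x_a - c)` with `S` a set of `b` values avoiding `s_a`:
it does not vanish at `s`, and its nonzeros form a box of size `(q - b) q^(m - a - 1)`, so the
puncture removes exactly one of them.
-/

open MvPolynomial Finset

variable {K : Type*} [Field K]

section ProdXSubC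

variable {σ : Type*} [Fintype σ]

noncomputable def prodXSubC (Z : σ → Finset K) : MvPolynomial σ K :=
  ∏ i, ∏ c ∈ Z i, (X i - C c)

theorem eval_prodXSubC_ne_zero_iff (Z : σ → Finset K) (v : σ → K) :
    eval v (prodXSubC Z) ≠ 0 ↔ ∀ i, v i ∉ Z i := by
  simp only [prodXSubC, eval_prod, map_sub, eval_X, eval_C, ne_eq, prod_eq_zero_iff,
    sub_eq_zero, mem_univ, true_and, not_exists, exists_eq_right']

theorem totalDegree_prodXSubC_le (Z : σ → Finset K) :
    (prodXSubC Z).totalDegree ≤ ∑ i, #(Z i) := by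
  refine (totalDegree_finsetProd _ _).trans (sum_le_sum fun i _ => ?_)
  refine (totalDegree_finsetProd _ _).trans ?_
  rw [card_eq_sum_ones]
  exact sum_le_sum fun c _ => (totalDegree_sub_C_le _ _).trans (totalDegree_X _).le

theorem degreeOf_prodXSubC_le [DecidableEq σ] (Z : σ → Finset K) (j : σ) :
    (prodXSubC Z).degreeOf j ≤ #(Z j) := by
  refine (degreeOf_prod_le _ _ _).trans ?_
  calc ∑ i, degreeOf j (∏ c ∈ Z i, (X i - C c)) ≤ ∑ i, if j = i then #(Z i) else 0 := by
        refine sum_le_sum fun i _ => (degreeOf_prod_le _ _ _).trans ?_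
        calc ∑ c ∈ Z i, degreeOf j (X i - C c) ≤ ∑ c ∈ Z i, if j = i then 1 else 0 :=
              sum_le_sum fun c _ => (degreeOf_sub_le _ _ _).trans (by simp [degreeOf_X])
          _ = _ := by split_ifs <;> simp
    _ = #(Z j) := by simp

end ProdXSubC

variable [Fintype K] [DecidableEq K]

noncomputable def evalWeight {σ : Type*} [Fintype σ] [DecidableEq σ]
    (f : MvPolynomial σ K) : ℕ :=
  #{v : σ → K | eval v f ≠ 0}

theorem evalWeight_prodXSubC {σ : Type*} [Fintype σ] [DecidableEq σ] (Z : σ → Finset K) :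
    evalWeight (prodXSubC Z) = ∏ i, (Fintype.card K - #(Z i)) := by
  have hbox : ({v | eval v (prodXSubC Z) ≠ 0} : Finset (σ → K)) =
      Fintype.piFinset fun i => (Z i)ᶜ := by
    ext v
    simp [eval_prodXSubC_ne_zero_iff]
  rw [evalWeight, hbox, Fintype.card_piFinset]
  simp only [card_compl]

theorem evalWeight_eq_one_of_isEmpty {σ : Type*} [Fintype σ] [DecidableEq σ] [IsEmpty σ]
    {f : MvPolynomial σ K} (hf : f ≠ 0) : evalWeight f = 1 := by
  rw [evalWeight, filter_true_of_mem fun v _ => ?_, card_univ, Fintype.card_unique]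
  rw [eq_C_of_isEmpty f, eval_C]
  exact fun h => hf (by rw [eq_C_of_isEmpty f, h, C_0])

theorem Polynomial.card_sub_natDegree_le_card_eval_ne_zero {P : Polynomial K} (hP : P ≠ 0) :
    Fintype.card K - P.natDegree ≤ #{x | P.eval x ≠ 0} := by
  have hroots : #{x | P.eval x = 0} ≤ P.natDegree :=
    Polynomial.card_le_degree_of_subset_roots fun x hx => by
      simpa [Polynomial.mem_roots hP] using hx
  have hsplit := card_filter_add_card_filter_not (s := (univ : Finset K)) (P.eval · = 0)
  simp only [card_univ, ← ne_eq] at hsplit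
  omega

theorem evalWeight_eq_sum_fiber {n : ℕ} (f : MvPolynomial (Fin (n + 1)) K) :
    evalWeight f = ∑ w : Fin n → K, #{x | eval (Fin.cons x w) f ≠ 0} := by
  simp only [evalWeight, card_filter]
  rw [← (Fin.consEquiv fun _ => K).sum_comp, Fintype.sum_prod_type_right]
  rfl

theorem mul_evalWeight_leadingCoeff_le {n : ℕ} (f : MvPolynomial (Fin (n + 1)) K) :
    (Fintype.card K - (finSuccEquiv K n f).natDegree) *
      evalWeight (finSuccEquiv K n f).leadingCoeff ≤ evalWeight f := by
  set F := finSuccEquiv K n f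
  have fiber : ∀ w : Fin n → K, eval w F.leadingCoeff ≠ 0 →
      Fintype.card K - F.natDegree ≤ #{x | eval (Fin.cons x w) f ≠ 0} := by
    intro w hw
    have hcoeff : (F.map (eval w)).coeff F.natDegree ≠ 0 := by
      rwa [Polynomial.coeff_map]
    have hne : F.map (eval w) ≠ 0 := fun h => hcoeff (by simp [h])
    calc Fintype.card K - F.natDegree ≤ Fintype.card K - (F.map (eval w)).natDegree :=
          Nat.sub_le_sub_left Polynomial.natDegree_map_le _
      _ ≤ _ := Polynomial.card_sub_natDegree_le_card_eval_ne_zero hne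
      _ = _ := by simp only [eval_eq_eval_mv_eval', F]
  rw [evalWeight_eq_sum_fiber, evalWeight, mul_comm, ← smul_eq_mul]
  calc _ ≤ ∑ w ∈ {w | eval w F.leadingCoeff ≠ 0}, #{x | eval (Fin.cons x w) f ≠ 0} :=
        card_nsmul_le_sum _ _ _ fun w hw => fiber w (mem_filter.mp hw).2
    _ ≤ _ := sum_le_sum_of_subset (subset_univ _)

theorem Nat.sub_mul_le_sub_mul_sub_sub {q b t : ℕ} (htb : t ≤ b) (hbq : b ≤ q) :
    (q - b) * q ≤ (q - t) * (q - (b - t)) := by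
  zify [htb, hbq, htb.trans hbq, (Nat.sub_le b t).trans hbq]
  nlinarith

theorem Nat.sub_le_sub_mul_sub_add_one {q b t : ℕ} (hbt : b < t) (htq : t < q) :
    q - b ≤ (q - t) * (t - b + 1) := by
  zify [hbt.le, htq.le, (hbt.trans htq).le]
  nlinarith

/-- Multiplying by `q` lets `n - a` truncate: for `a ≥ n` the bound only says that `f` has a
nonzero. -/
theorem sub_mul_pow_le_card_mul_evalWeight {n : ℕ} {f : MvPolynomial (Fin n) K} (hf : f ≠ 0)
    (hred : ∀ i, f.degreeOf i ≤ Fintype.card K - 1) {a b : ℕ} (hb : b ≤ Fintype.card K - 1)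
    (hdeg : f.totalDegree ≤ a * (Fintype.card K - 1) + b) :
    (Fintype.card K - b) * Fintype.card K ^ (n - a) ≤ Fintype.card K * evalWeight f := by
  set q := Fintype.card K
  have hq : 1 < q := Fintype.one_lt_card
  induction n generalizing a b with
  | zero =>
    rw [evalWeight_eq_one_of_isEmpty hf, Nat.zero_sub, pow_zero]
    omega
  | succ n ih =>
    set F := finSuccEquiv K n f
    set t := F.natDegree
    set g := F.leadingCoeff
    have hg : g ≠ 0 := Polynomial.leadingCoeff_ne_zero.mpr (by simpa [F] using hf)
    have ht : t ≤ q - 1 := (natDegree_finSuccEquiv f).trans_le (hred 0)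
    have hgred : ∀ j, g.degreeOf j ≤ q - 1 :=
      fun j => (degreeOf_coeff_finSuccEquiv f j t).trans (hred j.succ)
    have hgdeg : g.totalDegree + t ≤ a * (q - 1) + b :=
      (totalDegree_coeff_finSuccEquiv_add_le f t hg).trans hdeg
    have hfg : (q - t) * evalWeight g ≤ evalWeight f := mul_evalWeight_leadingCoeff_le f
    rcases le_or_gt t b with htb | hbt
    · have hg' := ih hg hgred (a := a) (b := b - t) (by omega) (by omega)
      calc (q - b) * q ^ (n + 1 - a) ≤ (q - b) * q * q ^ (n - a) := by
            rw [mul_assoc, ← pow_succ']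
            gcongr
            exacts [by omega, by omega]
        _ ≤ (q - t) * (q - (b - t)) * q ^ (n - a) :=
            Nat.mul_le_mul_right _ (Nat.sub_mul_le_sub_mul_sub_sub htb (by omega))
        _ ≤ (q - t) * (q * evalWeight g) := by rw [mul_assoc]; gcongr
        _ ≤ q * evalWeight f := by rw [mul_left_comm]; gcongr
    · -- `t > b` forces `a ≥ 1`, and `g` has degree at most `(a - 1) (q - 1) + (q - 1 + b - t)`.
      obtain ⟨a, rfl⟩ : ∃ a', a = a' + 1 := Nat.exists_eq_succ_of_ne_zero (by
        rintro rfl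
        omega)
      have hg' := ih hg hgred (a := a) (b := q - 1 + b - t) (by omega) (by
        rw [add_mul, one_mul] at hgdeg
        omega)
      rw [show q - (q - 1 + b - t) = t - b + 1 by omega] at hg'
      calc (q - b) * q ^ (n + 1 - (a + 1)) ≤ (q - t) * (t - b + 1) * q ^ (n - a) := by
            rw [Nat.add_sub_add_right]
            exact Nat.mul_le_mul_right _ (Nat.sub_le_sub_mul_sub_add_one hbt (by omega))
        _ ≤ (q - t) * (q * evalWeight g) := by rw [mul_assoc]; gcongr
        _ ≤ q * evalWeight f := by rw [mul_left_comm]; gcongr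

@[to_additive]
theorem prod_range_ite_lt_eq {M : Type*} [CommMonoid M] {a m : ℕ} (h : a < m) (x y z : M) :
    ∏ i ∈ range m, (if i < a then x else if i = a then y else z) =
      x ^ a * y * z ^ (m - a - 1) := by
  induction m, h using Nat.le_induction with
  | base =>
    rw [prod_range_succ, prod_congr rfl fun i hi => if_pos (mem_range.mp hi), prod_const,
      card_range, if_neg (lt_irrefl a), if_pos rfl]
    simp
  | succ m ham ih =>
    rw [prod_range_succ, ih, if_neg (by omega), if_neg (by omega),
      show m + 1 - a - 1 = m - a - 1 + 1 by omega, pow_succ, mul_assoc _ (z ^ _)]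

theorem exists_eval_ne_zero_and_evalWeight_eq {m a b : ℕ} (ham : a < m)
    (hb : b ≤ Fintype.card K - 1) (s : Fin m → K) :
    ∃ f : MvPolynomial (Fin m) K, f ≠ 0 ∧ (∀ i, f.degreeOf i ≤ Fintype.card K - 1) ∧
      f.totalDegree ≤ a * (Fintype.card K - 1) + b ∧ eval s f ≠ 0 ∧
      Fintype.card K * evalWeight f = (Fintype.card K - b) * Fintype.card K ^ (m - a) := by
  set q := Fintype.card K
  set k : ℕ → ℕ := fun i => if i < a then q - 1 else if i = a then b else 0
  have hk : ∀ i, k i ≤ q - 1 := fun i => by simp only [k]; split_ifs <;> omega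
  choose Z hZs hZcard using fun i : Fin m => exists_subset_card_eq (s := univ.erase (s i))
    (n := k i) (by rw [card_erase_of_mem (mem_univ _), card_univ]; exact hk i)
  have hs : eval s (prodXSubC Z) ≠ 0 :=
    (eval_prodXSubC_ne_zero_iff Z s).mpr fun i h => (mem_erase.mp (hZs i h)).1 rfl
  refine ⟨prodXSubC Z, fun h => hs (by rw [h, map_zero]),
    fun j => (degreeOf_prodXSubC_le Z j).trans (hZcard j ▸ hk j), ?_, hs, ?_⟩
  · calc _ ≤ ∑ i, #(Z i) := totalDegree_prodXSubC_le Z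
      _ = ∑ i ∈ range m, k i := by simp only [hZcard, Fin.sum_univ_eq_sum_range k]
      _ = a * (q - 1) + b := by simp [k, sum_range_ite_lt_eq ham]
  · have hq : 1 < q := Fintype.one_lt_card
    rw [evalWeight_prodXSubC]
    simp only [hZcard]
    rw [Fin.prod_univ_eq_prod_range (fun i => q - k i)]
    simp only [k, apply_ite (q - ·)]
    rw [prod_range_ite_lt_eq ham, show q - (q - 1) = 1 by omega, Nat.sub_zero, one_pow, one_mul,
      mul_left_comm, ← pow_succ', show m - a - 1 + 1 = m - a by omega]

theorem once_punctured_reedMuller_distance_general (p m r a b d : ℕ) [Fact p.Prime]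
    (hab : r = a * (p - 1) + b) (hb : b ≤ p - 2)
    (hd : p * d = (p - b) * p ^ (m - a)) (hd2 : 2 ≤ d)
    (s : Fin m → ZMod p) :
    IsLeast {n : ℕ | ∃ f : MvPolynomial (Fin m) (ZMod p), f ≠ 0 ∧
      (∀ i, f.degreeOf i ≤ p - 1) ∧ f.totalDegree ≤ r ∧
      n = (Finset.univ.filter
        fun v : Fin m → ZMod p => v ≠ s ∧ MvPolynomial.eval v f ≠ 0).card}
      (d - 1) := by
  have hp : 0 < p := (Fact.out : p.Prime).pos
  have hq : Fintype.card (ZMod p) = p := ZMod.card p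
  have hb' : b ≤ Fintype.card (ZMod p) - 1 := by omega
  have ham : a < m := by
    by_contra! h
    rw [Nat.sub_eq_zero_of_le h, pow_zero, mul_one] at hd
    have := Nat.mul_le_mul_left p hd2
    omega
  have punctured : ∀ f : MvPolynomial (Fin m) (ZMod p),
      ({v | v ≠ s ∧ eval v f ≠ 0} : Finset _) = ({v | eval v f ≠ 0} : Finset _).erase s := by
    intro f
    ext v
    simp only [mem_filter, mem_univ, true_and, mem_erase]
  constructor
  · obtain ⟨f, hf0, hred, hdeg, hfs, hW⟩ := exists_eval_ne_zero_and_evalWeight_eq ham hb' s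
    rw [hq] at hred hdeg hW
    refine ⟨f, hf0, hred, hab ▸ hdeg, ?_⟩
    rw [punctured, card_erase_of_mem (mem_filter.mpr ⟨mem_univ s, hfs⟩), ← evalWeight,
      Nat.eq_of_mul_eq_mul_left hp (hW.trans hd.symm)]
  · rintro n ⟨f, hf0, hred, hdeg, rfl⟩
    have hW := sub_mul_pow_le_card_mul_evalWeight hf0 (by rwa [hq]) hb' (by rwa [hq, ← hab])
    rw [hq, ← hd] at hW
    rw [punctured]
    exact (Nat.sub_le_sub_right (Nat.le_of_mul_le_mul_left hW hp) 1).trans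
      pred_card_le_card_erase

/-- Let `0 ≤ r ≤ m(p−1)`, write `r = a(p−1)+b` with
`0 ≤ b ≤ p−2`, and let `d = d_RM(r,m)` be the natural number with
`p·d = (p−b)·p^{m−a}`; suppose `d ≥ 2`.  Then for every puncture location
`s ∈ 𝔽_p^m`, the minimum over all nonzero reduced polynomials `f` of total
degree at most `r` of `#{v : v ≠ s ∧ f(v) ≠ 0}` equals `d − 1`. -/
theorem once_punctured_reedMuller_distance (p m r a b d : ℕ) [Fact p.Prime]
    (hm : 1 ≤ m) (hr : r ≤ m * (p - 1))
    (hab : r = a * (p - 1) + b) (hb : b ≤ p - 2)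
    (hd : p * d = (p - b) * p ^ (m - a)) (hd2 : 2 ≤ d)
    (s : Fin m → ZMod p) :
    IsLeast {n : ℕ | ∃ f : MvPolynomial (Fin m) (ZMod p), f ≠ 0 ∧
      (∀ i, f.degreeOf i ≤ p - 1) ∧ f.totalDegree ≤ r ∧
      n = (Finset.univ.filter
        fun v : Fin m → ZMod p => v ≠ s ∧ MvPolynomial.eval v f ≠ 0).card}
      (d - 1) :=
  once_punctured_reedMuller_distance_general p m r a b d hab hb hd hd2 s
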